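/- arXiv:2509.20773 — 3 statements merged into one kernel-verified Lean document; each statement's English description precedes it below -/
import Mathlib

section
/- Let s, L, l1, l2 be integers with l1 − l2 ≥ 2, L ≥ 3 and l1 ≤ l2 + L, and consider the points B1 = (l2, s − l2), B2 = (l1, s − l1) and C = (l2 + L, s − l2) in ℤ×ℤ (so that the lattice path of the word a^L from B1 is horizontal and ends at C). Then the number of binary words p of length L such that the lattice path of p from B2 ends at C, the paths P_{B1}(a^L) and P_{B2}(p) have only the point C in common, and the paths P_{B2}(p) and P_{B2}(a^L) have only the point B2 in common, equals C(L − 2, l2 + L − l1). -/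
/-- The point of the lattice path of the binary word `w` started at `A` after
`t` steps: `A + (|w_t|_a, |w_t|_b)` where `w_t` is the prefix of `w` of length
`t`.  The alphabet `{a, b}` is encoded by `Bool` with `a = true`, `b = false`. -/
def pathPt (A : ℤ × ℤ) (w : List Bool) (t : ℕ) : ℤ × ℤ :=
  (A.1 + ((w.take t).count true : ℤ), A.2 + ((w.take t).count false : ℤ))

/-- `P` is a common point of the lattice path of `w` from `A` and the lattice
path of `p` from `B`. -/
def CommonPt (A B : ℤ × ℤ) (w p : List Bool) (P : ℤ × ℤ) : Prop :=
  (∃ t ≤ w.length, pathPt A w t = P) ∧ (∃ t ≤ p.length, pathPt B p t = P)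

/-!
A word whose path from `B2` ends at `C` has `l2 + L - l1` letters `a`. Its path meets the
horizontal path from `B2` somewhere other than `B2` iff it starts with `a`, since after a first
`b`-step it stays strictly above that line. It meets the segment `[B1, C]` somewhere other than `C`
iff it ends with `a`: the point before a final `a`-step lies on the segment, while before a final
`b`-step the path stays strictly below it. So the admissible words are `b q b`, where `q` has
length `L - 2` and `l2 + L - l1` letters `a`.
-/

def wordsWithCount (n k : ℕ) : Set (List Bool) := {l | l.length = n ∧ l.count true = k}

lemma wordsWithCount_finite (n k : ℕ) : (wordsWithCount n k).Finite :=
  (List.finite_length_eq Bool n).subset fun _ h => h.1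

lemma wordsWithCount_zero_zero : wordsWithCount 0 0 = {[]} := by
  ext l; cases l <;> simp [wordsWithCount]

lemma wordsWithCount_zero_succ (k : ℕ) : wordsWithCount 0 (k + 1) = ∅ := by
  ext l; cases l <;> simp [wordsWithCount]

lemma wordsWithCount_succ_zero (n : ℕ) :
    wordsWithCount (n + 1) 0 = List.cons false '' wordsWithCount n 0 := by
  ext l; rcases l with _ | ⟨_ | _, t⟩ <;> simp [wordsWithCount]

lemma wordsWithCount_succ_succ (n k : ℕ) :
    wordsWithCount (n + 1) (k + 1) =
      List.cons true '' wordsWithCount n k ∪ List.cons false '' wordsWithCount n (k + 1) := by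
  ext l; rcases l with _ | ⟨_ | _, t⟩ <;> simp [wordsWithCount]

theorem ncard_wordsWithCount : ∀ n k : ℕ, (wordsWithCount n k).ncard = n.choose k
  | 0, 0 => by simp [wordsWithCount_zero_zero]
  | 0, k + 1 => by simp [wordsWithCount_zero_succ]
  | n + 1, 0 => by
    rw [wordsWithCount_succ_zero, Set.ncard_image_of_injective _ List.cons_injective,
      ncard_wordsWithCount n 0, Nat.choose_zero_right, Nat.choose_zero_right]
  | n + 1, k + 1 => by
    rw [wordsWithCount_succ_succ,
      Set.ncard_union_eq (by simp [Set.disjoint_left]) ((wordsWithCount_finite n k).image _)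
        ((wordsWithCount_finite n (k + 1)).image _),
      Set.ncard_image_of_injective _ List.cons_injective,
      Set.ncard_image_of_injective _ List.cons_injective,
      ncard_wordsWithCount n k, ncard_wordsWithCount n (k + 1), Nat.choose_succ_succ]

lemma List.exists_eq_cons_append_singleton {α : Type*} {p : List α} (h : 2 ≤ p.length) :
    ∃ b q c, p = b :: (q ++ [c]) := by
  obtain ⟨b, w, rfl⟩ := List.exists_cons_of_length_pos (show 0 < p.length by omega)
  rcases w.eq_nil_or_concat' with rfl | ⟨q, c, rfl⟩
  · simp at h
  · exact ⟨b, q, c, rfl⟩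

lemma pathPt_zero (A : ℤ × ℤ) (w : List Bool) : pathPt A w 0 = A := by
  simp [pathPt]

lemma pathPt_length (A : ℤ × ℤ) (w : List Bool) :
    pathPt A w w.length = (A.1 + w.count true, A.2 + w.count false) := by
  simp [pathPt]

lemma pathPt_replicate_true (A : ℤ × ℤ) {L t : ℕ} (ht : t ≤ L) :
    pathPt A (List.replicate L true) t = (A.1 + t, A.2) := by
  simp [pathPt, List.take_replicate, ht, List.count_replicate]

lemma pathPt_concat_of_le (A : ℤ × ℤ) (w : List Bool) (c : Bool) {t : ℕ}
    (ht : t ≤ w.length) :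
    pathPt A (w ++ [c]) t = pathPt A w t := by
  simp [pathPt, List.take_append_of_le_length ht]

lemma lt_pathPt_cons_false_snd (A : ℤ × ℤ) (w : List Bool) {t : ℕ} (ht : 0 < t) :
    A.2 < (pathPt A (false :: w) t).2 := by
  obtain ⟨t, rfl⟩ := Nat.exists_eq_add_of_lt ht
  simp [pathPt]

lemma pathPt_concat_false_snd_lt (A : ℤ × ℤ) (w : List Bool) {t : ℕ} (ht : t ≤ w.length) :
    (pathPt A (w ++ [false]) t).2 < (pathPt A (w ++ [false]) (w ++ [false]).length).2 := by
  rw [pathPt_concat_of_le A w false ht, pathPt_length]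
  have := (List.take_sublist t w).count_le false
  grind [pathPt]

lemma forall_commonPt_replicate_eq_start_iff (A : ℤ × ℤ) (b : Bool) (w : List Bool) {L : ℕ}
    (hL : 1 ≤ L) :
    (∀ P, CommonPt A A (b :: w) (List.replicate L true) P → P = A) ↔ b = false := by
  constructor
  · intro h
    by_contra hb
    rw [Bool.not_eq_false] at hb
    subst hb
    have := h (A.1 + 1, A.2)
      ⟨⟨1, by simp, by simp [pathPt]⟩,
        ⟨1, by simpa using hL, by simpa using pathPt_replicate_true A hL⟩⟩
    simp [Prod.ext_iff] at this
  · rintro rfl P ⟨⟨t, -, rfl⟩, ⟨u, hu, hPu⟩⟩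
    rcases Nat.eq_zero_or_pos t with rfl | ht
    · exact pathPt_zero A _
    · have := lt_pathPt_cons_false_snd A w ht
      rw [← hPu, pathPt_replicate_true A (by simpa using hu)] at this
      exact absurd this (lt_irrefl _)

lemma forall_commonPt_replicate_eq_end_iff (A B : ℤ × ℤ) (w : List Bool) (c : Bool) {L : ℕ}
    (hL : 1 ≤ L) (hend : pathPt A (w ++ [c]) (w ++ [c]).length = (B.1 + L, B.2)) :
    (∀ P, CommonPt B A (List.replicate L true) (w ++ [c]) P → P = (B.1 + L, B.2)) ↔
      c = false := by
  constructor
  · intro h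
    by_contra hc
    rw [Bool.not_eq_false] at hc
    subst hc
    have hprev : pathPt A (w ++ [true]) w.length = (B.1 + (L - 1 : ℕ), B.2) := by
      rw [pathPt_concat_of_le A w true le_rfl, pathPt_length]
      rw [pathPt_length] at hend
      grind
    have := h _
      ⟨⟨L - 1, by simp, pathPt_replicate_true B (by omega)⟩, ⟨w.length, by simp, hprev⟩⟩
    grind
  · rintro rfl P ⟨⟨u, hu, hPu⟩, ⟨t, ht, rfl⟩⟩
    rcases (show t ≤ w.length ∨ t = (w ++ [false]).length by grind) with ht | rfl
    · have := pathPt_concat_false_snd_lt A w ht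
      rw [hend, ← hPu, pathPt_replicate_true B (by simpa using hu)] at this
      exact absurd this (lt_irrefl _)
    · exact hend

lemma setOf_avoiding_eq_image (s l1 l2 : ℤ) {L k : ℕ} (hL : 2 ≤ L)
    (hk : (k : ℤ) = l2 + L - l1) :
    {p : List Bool | p.length = L ∧ pathPt (l1, s - l1) p L = (l2 + L, s - l2) ∧
        (∀ P, CommonPt (l2, s - l2) (l1, s - l1) (List.replicate L true) p P →
          P = (l2 + L, s - l2)) ∧
        (∀ P, CommonPt (l1, s - l1) (l1, s - l1) p (List.replicate L true) P →
          P = (l1, s - l1))} =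
      (fun q => false :: (q ++ [false])) '' wordsWithCount (L - 2) k := by
  ext p
  constructor
  · rintro ⟨hlen, hend, hlast, hfirst⟩
    obtain ⟨b, q, c, rfl⟩ := List.exists_eq_cons_append_singleton (show 2 ≤ p.length by omega)
    obtain rfl := (forall_commonPt_replicate_eq_start_iff _ b _ (by omega)).1 hfirst
    replace hend : pathPt (l1, s - l1) ((false :: q) ++ [c]) ((false :: q) ++ [c]).length =
        (l2 + L, s - l2) := by rw [List.cons_append, hlen]; exact hend
    obtain rfl := (forall_commonPt_replicate_eq_end_iff _ (l2, s - l2) _ c (by omega) hend).1 hlast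
    refine ⟨q, ⟨?_, ?_⟩, rfl⟩
    · grind
    · rw [pathPt_length] at hend; grind
  · rintro ⟨q, ⟨hq, hqk⟩, rfl⟩
    have hlen : (false :: (q ++ [false])).length = L := by grind
    have hend : pathPt (l1, s - l1) ((false :: q) ++ [false]) ((false :: q) ++ [false]).length =
        (l2 + L, s - l2) := by
      have := q.count_true_add_count_false
      rw [pathPt_length]; grind
    exact ⟨hlen, hlen ▸ hend,
      (forall_commonPt_replicate_eq_end_iff _ (l2, s - l2) (false :: q) _ (by omega) hend).2 rfl,
      (forall_commonPt_replicate_eq_start_iff _ _ _ (by omega)).2 rfl⟩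

theorem stmt_11_general (s l1 l2 : ℤ) (L : ℕ) (hL : 3 ≤ L)
    (hl1 : l1 ≤ l2 + L)
    (B1 B2 C : ℤ × ℤ)
    (hB1 : B1 = (l2, s - l2)) (hB2 : B2 = (l1, s - l1)) (hC : C = (l2 + L, s - l2)) :
    {p : List Bool | p.length = L ∧ pathPt B2 p L = C ∧
        (∀ P, CommonPt B1 B2 (List.replicate L true) p P → P = C) ∧
        (∀ P, CommonPt B2 B2 p (List.replicate L true) P → P = B2)}.ncard
      = (L - 2).choose (l2 + L - l1).toNat := by
  subst hB1 hB2 hC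
  obtain ⟨k, hk⟩ : ∃ k : ℕ, (k : ℤ) = l2 + L - l1 :=
    ⟨_, Int.toNat_of_nonneg (by omega)⟩
  have hinj : Function.Injective fun q : List Bool => false :: (q ++ [false]) :=
    fun _ _ h => by simpa using h
  rw [setOf_avoiding_eq_image s l1 l2 (by omega) hk, Set.ncard_image_of_injective _ hinj,
    ncard_wordsWithCount, show (l2 + L - l1).toNat = k by omega]

theorem stmt_11 (s l1 l2 : ℤ) (L : ℕ) (hd : 2 ≤ l1 - l2) (hL : 3 ≤ L)
    (hl1 : l1 ≤ l2 + L)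
    (B1 B2 C : ℤ × ℤ)
    (hB1 : B1 = (l2, s - l2)) (hB2 : B2 = (l1, s - l1)) (hC : C = (l2 + L, s - l2)) :
    {p : List Bool | p.length = L ∧ pathPt B2 p L = C ∧
        (∀ P, CommonPt B1 B2 (List.replicate L true) p P → P = C) ∧
        (∀ P, CommonPt B2 B2 p (List.replicate L true) P → P = B2)}.ncard
      = (L - 2).choose (l2 + L - l1).toNat :=
  stmt_11_general s l1 l2 L hL hl1 B1 B2 C hB1 hB2 hC
end

section
/- For every integer n ≥ 2, the number of mutually abelian-unbordered pairs (u,v) of binary words with |u| = |v| = n and |u|_a = |v|_a (equivalently, u and v are abelian equivalent) equals 2·Σ_{r=1}^{n−1} (1/(n−1))·C(n−1, r)·C(n−1, r−1), where each summand is a nonnegative integer (the sum may be computed in the rationals). -/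
/-- Abelian equivalence of binary words; the alphabet `{a, b}` is encoded by
`Bool` with `a = true` and `b = false`. -/
def AbEq (x y : List Bool) : Prop :=
  x.count true = y.count true ∧ x.count false = y.count false

/-- `(x, y)` is an internal abelian-border of `(u, v)`: `x` is a nonempty proper
suffix of `u`, `y` is a proper prefix of `v`, and `x ~ y`. -/
def IsIntBorder (u v x y : List Bool) : Prop :=
  x ≠ [] ∧ x ≠ u ∧ x <:+ u ∧ y <+: v ∧ y ≠ v ∧ AbEq x y

/-- `(x, y)` is an external abelian-border of `(u, v)`: `x` is a nonempty proper
prefix of `u`, `y` is a proper suffix of `v`, and `x ~ y`. -/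
def IsExtBorder (u v x y : List Bool) : Prop :=
  x ≠ [] ∧ x ≠ u ∧ x <+: u ∧ y <:+ v ∧ y ≠ v ∧ AbEq x y

/-- `(u, v)` has an internal abelian-border. -/
def HasIntB (u v : List Bool) : Prop := ∃ x y, IsIntBorder u v x y

/-- `(u, v)` has an external abelian-border. -/
def HasExtB (u v : List Bool) : Prop := ∃ x y, IsExtBorder u v x y

/-- `(u, v)` is mutually abelian-bordered. -/
def MAB (u v : List Bool) : Prop := HasIntB u v ∧ HasExtB u v

/-- `(u, v)` is mutually abelian-unbordered. -/
def MAU (u v : List Bool) : Prop := ¬ HasIntB u v ∧ ¬ HasExtB u v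

/-- `lsb u v` is the length of the shortest internal abelian-border of `(u, v)`:
the least `t` with `1 ≤ t ≤ |u| - 1` such that the suffix of `u` of length `t`
is abelian equivalent to the prefix of `v` of length `t`. -/
noncomputable def lsb (u v : List Bool) : ℕ :=
  sInf {t | 1 ≤ t ∧ t ≤ u.length - 1 ∧ AbEq (u.drop (u.length - t)) (v.take t)}

open List DyckStep

/-! ### Auxiliary development -/

-- basic counting
lemma count_tf (l : List Bool) : l.count true + l.count false = l.length := by
  induction l with
  | nil => rfl
  | cons a l ih => cases a <;> simp [count_cons] <;> omega

lemma abEq_iff (x y : List Bool) :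
    AbEq x y ↔ x.length = y.length ∧ x.count true = y.count true := by
  constructor
  · rintro ⟨h1, h2⟩
    refine ⟨?_, h1⟩
    rw [← count_tf x, ← count_tf y, h1, h2]
  · rintro ⟨h1, h2⟩
    refine ⟨h2, ?_⟩
    have := count_tf x; have := count_tf y; omega

/-- weight of a pair -/
def pval (p : Bool × Bool) : ℤ := (if p.1 then 1 else 0) - (if p.2 then 1 else 0)

/-- height of a pair word -/
def wt (w : List (Bool × Bool)) : ℤ :=
  ((w.map Prod.fst).count true : ℤ) - ((w.map Prod.snd).count true : ℤ)

lemma wt_nil : wt [] = 0 := rfl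

lemma wt_append (w₁ w₂ : List (Bool × Bool)) : wt (w₁ ++ w₂) = wt w₁ + wt w₂ := by
  simp [wt, count_append]; ring

lemma wt_cons (p : Bool × Bool) (w : List (Bool × Bool)) : wt (p :: w) = pval p + wt w := by
  obtain ⟨b, c⟩ := p
  cases b <;> cases c <;> simp [wt, pval, count_cons] <;> push_cast <;> ring

lemma wt_singleton (p : Bool × Bool) : wt [p] = pval p := by
  rw [wt_cons, wt_nil, add_zero]

/-- the positive class -/
def Pos (n : ℕ) (w : List (Bool × Bool)) : Prop :=
  w.length = n ∧ wt w = 0 ∧ ∀ t, 1 ≤ t → t ≤ n - 1 → 1 ≤ wt (w.take t)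

/-- the negative class -/
def NegC (n : ℕ) (w : List (Bool × Bool)) : Prop :=
  w.length = n ∧ wt w = 0 ∧ ∀ t, 1 ≤ t → t ≤ n - 1 → wt (w.take t) ≤ -1

/-- the full class -/
def Mid (n : ℕ) (w : List (Bool × Bool)) : Prop :=
  w.length = n ∧ wt w = 0 ∧ ∀ t, 1 ≤ t → t ≤ n - 1 → wt (w.take t) ≠ 0

/-! ### Border analysis -/

lemma hasExtB_iff {u v : List Bool} {n : ℕ} (hu : u.length = n) (hv : v.length = n) :
    HasExtB u v ↔ ∃ t, 1 ≤ t ∧ t ≤ n - 1 ∧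
      (u.take t).count true + (v.take (n - t)).count true = v.count true := by
  constructor
  · rintro ⟨x, y, hx0, hxu, hpre, hsuf, hyv, hab⟩
    obtain ⟨hlen, hcnt⟩ := (abEq_iff x y).mp hab
    refine ⟨x.length, ?_, ?_, ?_⟩
    · have := List.length_pos_iff.mpr hx0; omega
    · have h1 : x.length ≤ n := hu ▸ hpre.length_le
      rcases Nat.lt_or_ge x.length n with h | h
      · omega
      · exfalso; apply hxu
        have : x.length = n := le_antisymm h1 h
        rw [List.prefix_iff_eq_take.mp hpre, this, ← hu, List.take_length]
    · have hxeq : x = u.take x.length := List.prefix_iff_eq_take.mp hpre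
      have hyeq : y = v.drop (v.length - y.length) := List.suffix_iff_eq_drop.mp hsuf
      have hsplit := congrArg (List.count true) (List.take_append_drop (n - x.length) v)
      rw [List.count_append] at hsplit
      have h2 : (v.drop (n - x.length)).count true = x.count true := by
        conv_lhs => rw [show n - x.length = v.length - y.length by omega]
        rw [← hyeq]; exact hcnt.symm
      have h3 : x.count true = (u.take x.length).count true := by
        conv_lhs => rw [hxeq]
      omega
  · rintro ⟨t, ht1, ht2, hcnt⟩
    refine ⟨u.take t, v.drop (n - t), ?_, ?_, List.take_prefix t u, List.drop_suffix (n - t) v,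
      ?_, ?_⟩
    · have : (u.take t).length = t := by rw [List.length_take]; omega
      intro h; rw [h] at this; simp at this; omega
    · intro h
      have : (u.take t).length = t := by rw [List.length_take]; omega
      rw [h, hu] at this; omega
    · intro h
      have : (v.drop (n - t)).length = t := by rw [List.length_drop]; omega
      rw [h, hv] at this; omega
    · rw [abEq_iff]
      constructor
      · rw [List.length_take, List.length_drop]; omega
      · have hsplit := congrArg (List.count true) (List.take_append_drop (n - t) v)
        rw [List.count_append] at hsplit
        omega

lemma hasIntB_iff {u v : List Bool} {n : ℕ} (hu : u.length = n) (hv : v.length = n) :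
    HasIntB u v ↔ ∃ t, 1 ≤ t ∧ t ≤ n - 1 ∧
      (v.take t).count true + (u.take (n - t)).count true = u.count true := by
  constructor
  · rintro ⟨x, y, hx0, hxu, hsuf, hpre, hyv, hab⟩
    obtain ⟨hlen, hcnt⟩ := (abEq_iff x y).mp hab
    refine ⟨x.length, ?_, ?_, ?_⟩
    · have := List.length_pos_iff.mpr hx0; omega
    · have h1 : x.length ≤ n := hu ▸ hsuf.length_le
      rcases Nat.lt_or_ge x.length n with h | h
      · omega
      · exfalso; apply hxu
        have hxn : x.length = n := le_antisymm h1 h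
        have := List.suffix_iff_eq_drop.mp hsuf
        rw [this, hu, hxn, Nat.sub_self, List.drop_zero]
    · have hxeq : x = u.drop (u.length - x.length) := List.suffix_iff_eq_drop.mp hsuf
      have hyeq : y = v.take y.length := List.prefix_iff_eq_take.mp hpre
      have hsplit := congrArg (List.count true) (List.take_append_drop (n - x.length) u)
      rw [List.count_append] at hsplit
      have h2 : (u.drop (n - x.length)).count true = x.count true := by
        conv_rhs => rw [hxeq, hu]
      have h3 : (v.take x.length).count true = x.count true := by
        rw [hcnt]; conv_rhs => rw [hyeq, ← hlen]
      omega
  · rintro ⟨t, ht1, ht2, hcnt⟩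
    refine ⟨u.drop (n - t), v.take t, ?_, ?_, List.drop_suffix (n - t) u, List.take_prefix t v,
      ?_, ?_⟩
    · intro h
      have : (u.drop (n - t)).length = t := by rw [List.length_drop]; omega
      rw [h] at this; simp at this; omega
    · intro h
      have : (u.drop (n - t)).length = t := by rw [List.length_drop]; omega
      rw [h, hu] at this; omega
    · intro h
      have : (v.take t).length = t := by rw [List.length_take]; omega
      rw [h, hv] at this; omega
    · rw [abEq_iff]
      constructor
      · rw [List.length_take, List.length_drop]; omega
      · have hsplit := congrArg (List.count true) (List.take_append_drop (n - t) u)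
        rw [List.count_append] at hsplit
        omega

lemma wt_zip_take {u v : List Bool} {n : ℕ} (hu : u.length = n) (hv : v.length = n)
    {t : ℕ} (ht : t ≤ n) :
    wt ((zip u v.reverse).take t)
      = ((u.take t).count true : ℤ) + ((v.take (n - t)).count true : ℤ)
        - (v.count true : ℤ) := by
  have hzt : (zip u v.reverse).take t = zip (u.take t) (v.reverse.take t) :=
    List.take_zipWith
  have hl1 : (u.take t).length = t := by rw [List.length_take]; omega
  have hl2 : (v.reverse.take t).length = t := by
    rw [List.length_take, List.length_reverse]; omega
  have hfst : (zip (u.take t) (v.reverse.take t)).map Prod.fst = u.take t :=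
    List.map_fst_zip (by omega)
  have hsnd : (zip (u.take t) (v.reverse.take t)).map Prod.snd = v.reverse.take t :=
    List.map_snd_zip (by omega)
  have hrev : v.reverse.take t = (v.drop (v.length - t)).reverse := List.take_reverse
  have hsplit := congrArg (List.count true) (List.take_append_drop (n - t) v)
  rw [List.count_append] at hsplit
  rw [wt, hzt, hfst, hsnd, hrev, List.count_reverse, hv]
  have hle : (v.take (n - t)).count true ≤ v.count true := by omega
  push_cast
  omega

lemma mid_iff {u v : List Bool} {n : ℕ} (hn : 2 ≤ n) (hu : u.length = n) (hv : v.length = n) :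
    (u.count true = v.count true ∧ MAU u v) ↔ Mid n (zip u v.reverse) := by
  have hlen : (zip u v.reverse).length = n := by
    rw [List.length_zip, List.length_reverse, hu, hv, min_self]
  have hwtn : wt (zip u v.reverse)
      = (u.count true : ℤ) - (v.count true : ℤ) := by
    have := wt_zip_take hu hv (le_refl n)
    rw [List.take_of_length_le (le_of_eq hlen)] at this
    rw [this, Nat.sub_self, show n = u.length from hu.symm, List.take_length]
    simp
  constructor
  · rintro ⟨hc, hmau⟩
    refine ⟨hlen, by rw [hwtn, hc]; ring, fun t ht1 ht2 h0 => ?_⟩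
    have := wt_zip_take hu hv (show t ≤ n by omega)
    rw [this] at h0
    exact hmau.2 ((hasExtB_iff hu hv).mpr ⟨t, ht1, ht2, by omega⟩)
  · rintro ⟨-, hw0, hmid⟩
    have hc : u.count true = v.count true := by
      rw [hwtn] at hw0; omega
    refine ⟨hc, ?_, ?_⟩
    · intro hib
      obtain ⟨t, ht1, ht2, hcnt⟩ := (hasIntB_iff hu hv).mp hib
      have ht' : 1 ≤ n - t ∧ n - t ≤ n - 1 := by omega
      apply hmid (n - t) ht'.1 ht'.2
      rw [wt_zip_take hu hv (show n - t ≤ n by omega),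
        show n - (n - t) = t by omega]
      omega
    · intro heb
      obtain ⟨t, ht1, ht2, hcnt⟩ := (hasExtB_iff hu hv).mp heb
      apply hmid t ht1 ht2
      rw [wt_zip_take hu hv (show t ≤ n by omega)]
      omega

/-! ### Discrete IVT and trichotomy -/

lemma ivt (f : ℕ → ℤ) (hstep : ∀ k, f k - 1 ≤ f (k + 1) ∧ f (k + 1) ≤ f k + 1)
    (a b : ℕ) (hab : a ≤ b) (ha : 0 < f a) (hb : f b < 0) :
    ∃ k, a ≤ k ∧ k ≤ b ∧ f k = 0 := by
  induction b, hab using Nat.le_induction with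
  | base => omega
  | succ b hab ih =>
    rcases lt_trichotomy (f b) 0 with h | h | h
    · obtain ⟨k, hk1, hk2, hk3⟩ := ih h
      exact ⟨k, hk1, by omega, hk3⟩
    · exact ⟨b, hab, by omega, h⟩
    · have := (hstep b).1
      omega

lemma wt_take_step (w : List (Bool × Bool)) (k : ℕ) :
    wt (w.take k) - 1 ≤ wt (w.take (k + 1)) ∧ wt (w.take (k + 1)) ≤ wt (w.take k) + 1 := by
  rcases h : w[k]? with _ | p
  · rw [List.take_succ, h]
    simp [wt_append, wt_nil]
  · rw [List.take_succ, h]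
    have hb : -1 ≤ pval p ∧ pval p ≤ 1 := by
      obtain ⟨b, c⟩ := p; cases b <;> cases c <;> simp [pval]
    simp only [Option.toList, wt_append, wt_singleton]
    omega

lemma mid_iff_pos_or_neg {n : ℕ} (hn : 2 ≤ n) (w : List (Bool × Bool)) :
    Mid n w ↔ (Pos n w ∨ NegC n w) := by
  constructor
  · rintro ⟨hl, h0, hm⟩
    have h1 := hm 1 le_rfl (by omega)
    rcases lt_trichotomy (wt (w.take 1)) 0 with hs | hs | hs
    · right
      refine ⟨hl, h0, fun t ht1 ht2 => ?_⟩
      by_contra hcon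
      push_neg at hcon
      have hne := hm t ht1 ht2
      obtain ⟨k, hk1, hk2, hk3⟩ := ivt (fun k => - wt (w.take k))
        (fun k => by
          have := wt_take_step w k
          refine ⟨?_, ?_⟩
          · show - wt (w.take k) - 1 ≤ - wt (w.take (k + 1)); omega
          · show - wt (w.take (k + 1)) ≤ - wt (w.take k) + 1; omega)
        1 t ht1
        (by show (0:ℤ) < - wt (w.take 1); omega) (by show - wt (w.take t) < 0; omega)
      have hk3' : - wt (w.take k) = 0 := hk3
      exact hm k hk1 (by omega) (by omega)
    · exact absurd hs h1
    · left
      refine ⟨hl, h0, fun t ht1 ht2 => ?_⟩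
      by_contra hcon
      push_neg at hcon
      have hne := hm t ht1 ht2
      obtain ⟨k, hk1, hk2, hk3⟩ := ivt (fun k => wt (w.take k))
        (fun k => wt_take_step w k) 1 t ht1
        (by show (0:ℤ) < wt (w.take 1); omega) (by show wt (w.take t) < 0; omega)
      exact hm k hk1 (by omega) hk3
  · rintro (⟨hl, h0, hp⟩ | ⟨hl, h0, hp⟩) <;>
      exact ⟨hl, h0, fun t ht1 ht2 => by have := hp t ht1 ht2; omega⟩

/-! ### Dyck word correspondence -/

def b2d : Bool → DyckStep
  | true => U
  | false => D

def d2b : DyckStep → Bool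
  | U => true
  | D => false

@[simp] lemma d2b_b2d (b : Bool) : d2b (b2d b) = b := by cases b <;> rfl
@[simp] lemma b2d_d2b (s : DyckStep) : b2d (d2b s) = s := by cases s <;> rfl

def stepsOf (p : Bool × Bool) : List DyckStep := [b2d p.1, b2d (!p.2)]

def pairsOf : List DyckStep → List (Bool × Bool)
  | x :: y :: rest => (d2b x, !(d2b y)) :: pairsOf rest
  | _ => []

lemma pairs_flat (w : List (Bool × Bool)) : pairsOf (w.flatMap stepsOf) = w := by
  induction w with
  | nil => rfl
  | cons p w ih =>
    obtain ⟨b, c⟩ := p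
    rw [List.flatMap_cons]
    show (d2b (b2d b), !(d2b (b2d (!c)))) :: pairsOf (w.flatMap stepsOf) = (b, c) :: w
    rw [ih, d2b_b2d, d2b_b2d, Bool.not_not]

lemma length_flat (w : List (Bool × Bool)) : (w.flatMap stepsOf).length = 2 * w.length := by
  induction w with
  | nil => rfl
  | cons p w ih => simp [stepsOf, ih]; ring

lemma flat_pairs : ∀ (k : ℕ) (l : List DyckStep), l.length = 2 * k →
    (pairsOf l).flatMap stepsOf = l := by
  intro k
  induction k with
  | zero =>
    intro l hl
    rw [List.length_eq_zero_iff.mp hl]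
    rfl
  | succ k ih =>
    intro l hl
    match l with
    | x :: y :: rest =>
      have : rest.length = 2 * k := by simp at hl; omega
      show stepsOf (d2b x, !(d2b y)) ++ (pairsOf rest).flatMap stepsOf = x :: y :: rest
      rw [ih rest this]
      simp [stepsOf]
    | [] => simp only [List.length_nil] at hl; omega
    | [x] => simp only [List.length_cons, List.length_nil] at hl; omega

lemma length_pairsOf : ∀ (k : ℕ) (l : List DyckStep), l.length = 2 * k →
    (pairsOf l).length = k := by
  intro k
  induction k with
  | zero =>
    intro l hl
    rw [List.length_eq_zero_iff.mp hl]
    rfl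
  | succ k ih =>
    intro l hl
    match l with
    | x :: y :: rest =>
      have : rest.length = 2 * k := by simp at hl; omega
      show ((d2b x, !(d2b y)) :: pairsOf rest).length = k + 1
      rw [List.length_cons, ih rest this]
    | [] => simp only [List.length_nil] at hl; omega
    | [x] => simp only [List.length_cons, List.length_nil] at hl; omega

lemma take_flat : ∀ (k : ℕ) (w : List (Bool × Bool)),
    (w.flatMap stepsOf).take (2 * k) = (w.take k).flatMap stepsOf := by
  intro k
  induction k with
  | zero => intro w; simp
  | succ k ih =>
    intro w
    match w with
    | [] => simp
    | p :: w =>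
      rw [show 2 * (k + 1) = (2 * k + 1) + 1 by ring, List.flatMap_cons]
      show (stepsOf p ++ w.flatMap stepsOf).take ((2 * k + 1) + 1)
        = stepsOf p ++ (w.take k).flatMap stepsOf
      rw [← ih w]
      rfl

/-- signed count for Dyck step lists -/
def cnt (L : List DyckStep) : ℤ := (L.count U : ℤ) - (L.count D : ℤ)

lemma cnt_nil : cnt [] = 0 := rfl

lemma cnt_append (L₁ L₂ : List DyckStep) : cnt (L₁ ++ L₂) = cnt L₁ + cnt L₂ := by
  simp [cnt, List.count_append]; ring

lemma cnt_cons_U (L : List DyckStep) : cnt (U :: L) = 1 + cnt L := by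
  simp [cnt, List.count_cons]; ring

lemma cnt_cons_D (L : List DyckStep) : cnt (D :: L) = cnt L - 1 := by
  simp [cnt, List.count_cons]; ring

lemma cnt_flat (w : List (Bool × Bool)) : cnt (w.flatMap stepsOf) = 2 * wt w := by
  induction w with
  | nil => simp [cnt_nil, wt_nil]
  | cons p w ih =>
    rw [List.flatMap_cons, cnt_append, ih, wt_cons]
    have : cnt (stepsOf p) = 2 * pval p := by
      obtain ⟨b, c⟩ := p
      cases b <;> cases c <;> simp [stepsOf, pval, b2d, cnt, List.count_cons]
    rw [this]; ring

lemma count_UD (L : List DyckStep) : L.count U + L.count D = L.length := by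
  induction L with
  | nil => rfl
  | cons s L ih => cases s <;> simp [List.count_cons] <;> omega

lemma cnt_take_step (L : List DyckStep) (k : ℕ) :
    cnt (L.take k) - 1 ≤ cnt (L.take (k + 1)) ∧ cnt (L.take (k + 1)) ≤ cnt (L.take k) + 1 := by
  rcases h : L[k]? with _ | s
  · rw [List.take_succ, h]
    simp [cnt_append, cnt_nil]
  · rw [List.take_succ, h]
    have : cnt [s] = 1 ∨ cnt [s] = -1 := by cases s <;> simp [cnt]
    simp only [Option.toList, cnt_append]
    omega

lemma pos_shape {n : ℕ} {w : List (Bool × Bool)} (hn : 2 ≤ n) (hw : Pos n w) :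
    ∃ mid, w = (true, false) :: mid ++ [(false, true)] ∧ mid.length = n - 2 := by
  obtain ⟨hl, h0, hp⟩ := hw
  cases w with
  | nil => simp at hl; omega
  | cons a w' =>
    have hl' : w'.length = n - 1 := by simp at hl; omega
    have hw' : w' ≠ [] := by
      intro h; rw [h] at hl'; simp at hl'; omega
    have htake1 : wt ((a :: w').take 1) = pval a := by
      rw [List.take_succ_cons, List.take_zero, wt_singleton]
    have h1 := hp 1 le_rfl (by omega)
    rw [htake1] at h1
    have ha : a = (true, false) := by
      obtain ⟨b, c⟩ := a
      cases b <;> cases c <;> simp [pval] at h1 ⊢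
    set b := w'.getLast hw' with hbdef
    have hsplit : w'.dropLast ++ [b] = w' := List.dropLast_append_getLast hw'
    have hdl : w'.dropLast.length = n - 2 := by
      rw [List.length_dropLast, hl']; omega
    have hmidlen : (a :: w'.dropLast).length = n - 1 := by
      rw [List.length_cons, hdl]; omega
    have htaken1 : (a :: w').take (n - 1) = a :: w'.dropLast := by
      conv_lhs => rw [← hsplit]
      rw [show a :: (w'.dropLast ++ [b]) = (a :: w'.dropLast) ++ [b] from rfl]
      rw [List.take_append, hmidlen, Nat.sub_self, List.take_zero,
        List.append_nil, List.take_of_length_le (le_of_eq hmidlen)]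
    have hp1 := hp (n - 1) (by omega) le_rfl
    rw [htaken1] at hp1
    have h0' : wt (a :: w') = wt (a :: w'.dropLast) + pval b := by
      conv_lhs => rw [← hsplit]
      rw [show a :: (w'.dropLast ++ [b]) = (a :: w'.dropLast) ++ [b] from rfl,
        wt_append, wt_singleton]
    have hpb : pval b ≤ -1 := by omega
    have hb : b = (false, true) := by
      obtain ⟨b1, b2⟩ := b
      cases b1 <;> cases b2 <;> simp [pval] at hpb ⊢
    refine ⟨w'.dropLast, ?_, hdl⟩
    conv_lhs => rw [← hsplit]
    rw [ha, hb, List.cons_append]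

def toDyckList (w : List (Bool × Bool)) : List DyckStep := ((w.flatMap stepsOf).drop 1).dropLast

lemma toDyckList_spec {w : List (Bool × Bool)} {d : List DyckStep}
    (h : w.flatMap stepsOf = U :: d ++ [D]) : toDyckList w = d := by
  rw [toDyckList, h, List.drop_one]
  show (d ++ [D]).dropLast = d
  exact List.dropLast_concat

lemma pos_full {n : ℕ} {w : List (Bool × Bool)} (hn : 2 ≤ n) (hw : Pos n w) :
    w.flatMap stepsOf = U :: toDyckList w ++ [D] := by
  obtain ⟨mid, hsh, hml⟩ := pos_shape hn hw
  have : w.flatMap stepsOf = U :: (U :: mid.flatMap stepsOf ++ [D]) ++ [D] := by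
    rw [hsh]
    simp [stepsOf, b2d]
  rw [this, toDyckList_spec this]

lemma pos_hfull {n : ℕ} {w : List (Bool × Bool)} (hn : 2 ≤ n) (hw : Pos n w) :
    ∀ j, 1 ≤ j → j ≤ 2 * n - 1 → 1 ≤ cnt ((w.flatMap stepsOf).take j) := by
  intro j hj1 hj2
  have hpos2 : ∀ k, 1 ≤ k → k ≤ n - 1 → 2 ≤ cnt ((w.flatMap stepsOf).take (2 * k)) := by
    intro k h1 h2
    rw [take_flat, cnt_flat]
    have := hw.2.2 k h1 h2
    omega
  rcases Nat.even_or_odd j with ⟨k, hk⟩ | ⟨k, hk⟩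
  · have hj : j = 2 * k := by omega
    subst hj
    exact le_trans (by omega) (hpos2 k (by omega) (by omega))
  · subst hk
    by_cases hk0 : k = 0
    · subst hk0
      have hstep := cnt_take_step (w.flatMap stepsOf) 1
      have h2 := hpos2 1 le_rfl (by omega)
      rw [show 2 * 1 = 1 + 1 from rfl] at h2
      rw [show 2 * 0 + 1 = 1 from rfl]
      omega
    · have hstep := cnt_take_step (w.flatMap stepsOf) (2 * k)
      have h2 := hpos2 k (by omega) (by omega)
      omega

lemma cnt_nonneg_iff (L : List DyckStep) : 0 ≤ cnt L ↔ L.count D ≤ L.count U := by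
  simp only [cnt]; omega

lemma pos_length_toDyck {n : ℕ} {w : List (Bool × Bool)} (hn : 2 ≤ n) (hw : Pos n w) :
    (toDyckList w).length = 2 * n - 2 := by
  have h := pos_full hn hw
  have h2 := length_flat w
  rw [h, hw.1] at h2
  simp only [List.cons_append, List.length_cons, List.length_append, List.length_cons,
    List.length_nil] at h2
  omega

lemma pos_cnt_toDyck {n : ℕ} {w : List (Bool × Bool)} (hn : 2 ≤ n) (hw : Pos n w) :
    cnt (toDyckList w) = 0 := by
  have hc : cnt (w.flatMap stepsOf) = 0 := by rw [cnt_flat, hw.2.1, mul_zero]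
  rw [pos_full hn hw, List.cons_append, cnt_cons_U, cnt_append] at hc
  have : cnt [D] = -1 := rfl
  omega

def FDyck {n : ℕ} (hn : 2 ≤ n) (w : List (Bool × Bool)) (hw : Pos n w) : DyckWord where
  toList := toDyckList w
  count_U_eq_count_D := by
    have := pos_cnt_toDyck hn hw
    simp only [cnt] at this
    omega
  count_D_le_count_U i := by
    rcases le_or_gt (toDyckList w).length i with h | h
    · rw [List.take_of_length_le h]
      have := pos_cnt_toDyck hn hw
      simp only [cnt] at this
      omega
    · rw [← cnt_nonneg_iff]
      have hlen := pos_length_toDyck hn hw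
      have hkey : ((w.flatMap stepsOf).take (i + 1)) = U :: (toDyckList w).take i := by
        rw [pos_full hn hw, List.cons_append, List.take_succ_cons,
          List.take_append, show i - (toDyckList w).length = 0 by omega,
          List.take_zero, List.append_nil]
      have hge := pos_hfull hn hw (i + 1) (by omega) (by omega)
      rw [hkey, cnt_cons_U] at hge
      omega

lemma semilength_FDyck {n : ℕ} (hn : 2 ≤ n) (w : List (Bool × Bool)) (hw : Pos n w) :
    (FDyck hn w hw).semilength = n - 1 := by
  have h := (FDyck hn w hw).two_mul_semilength_eq_length
  have h2 : (FDyck hn w hw).toList.length = 2 * n - 2 := pos_length_toDyck hn hw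
  omega

def GPos (p : DyckWord) : List (Bool × Bool) := pairsOf (U :: p.toList ++ [D])

lemma len_G_helper (p : DyckWord) : (U :: p.toList ++ [D]).length = 2 * (p.semilength + 1) := by
  have := p.two_mul_semilength_eq_length
  simp only [List.cons_append, List.length_cons, List.length_append, List.length_nil]
  omega

lemma G_flat (p : DyckWord) : (GPos p).flatMap stepsOf = U :: p.toList ++ [D] :=
  flat_pairs (p.semilength + 1) _ (len_G_helper p)

lemma G_length (p : DyckWord) : (GPos p).length = p.semilength + 1 :=
  length_pairsOf (p.semilength + 1) _ (len_G_helper p)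

lemma dyck_cnt_take_odd (p : DyckWord) (j : ℕ) (hj : j ≤ p.toList.length)
    (hodd : j % 2 = 1) : 1 ≤ cnt (p.toList.take j) := by
  have h0 := p.count_D_le_count_U j
  have hUD := count_UD (p.toList.take j)
  rw [List.length_take, min_eq_left hj] at hUD
  simp only [cnt]
  omega

lemma G_pos {n : ℕ} (hn : 2 ≤ n) (p : DyckWord) (hp : p.semilength = n - 1) :
    Pos n (GPos p) := by
  have hlen : (GPos p).length = n := by rw [G_length, hp]; omega
  have hflat := G_flat p
  have hll : p.toList.length = 2 * (n - 1) := by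
    have := p.two_mul_semilength_eq_length
    omega
  have hcnt0 : cnt p.toList = 0 := by
    have := p.count_U_eq_count_D
    simp only [cnt]
    omega
  refine ⟨hlen, ?_, ?_⟩
  · have h := cnt_flat (GPos p)
    rw [hflat, List.cons_append, cnt_cons_U, cnt_append, hcnt0] at h
    have : cnt [D] = -1 := rfl
    omega
  · intro t ht1 ht2
    have e1 : cnt (((GPos p).flatMap stepsOf).take (2 * t)) = 2 * wt ((GPos p).take t) := by
      rw [take_flat, cnt_flat]
    have htk : ((GPos p).flatMap stepsOf).take (2 * t) = U :: p.toList.take (2 * t - 1) := by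
      rw [hflat, List.cons_append, show 2 * t = (2 * t - 1) + 1 by omega, List.take_succ_cons,
        List.take_append, show 2 * t - 1 - p.toList.length = 0 by omega,
        List.take_zero, List.append_nil, Nat.add_sub_cancel]
    have hodd := dyck_cnt_take_odd p (2 * t - 1) (by omega) (by omega)
    rw [htk, cnt_cons_U] at e1
    omega

def posDyck (n : ℕ) (hn : 2 ≤ n) :
    {w : List (Bool × Bool) // Pos n w} ≃ {p : DyckWord // p.semilength = n - 1} where
  toFun x := ⟨FDyck hn x.1 x.2, semilength_FDyck hn x.1 x.2⟩
  invFun x := ⟨GPos x.1, G_pos hn x.1 x.2⟩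
  left_inv x := by
    obtain ⟨w, hw⟩ := x
    apply Subtype.ext
    show GPos (FDyck hn w hw) = w
    rw [GPos, show (FDyck hn w hw).toList = toDyckList w from rfl,
      ← pos_full hn hw, pairs_flat]
  right_inv x := by
    obtain ⟨p, hp⟩ := x
    apply Subtype.ext
    apply DyckWord.ext
    show toDyckList (GPos p) = p.toList
    exact toDyckList_spec (G_flat p)

/-! ### Swap involution -/

def swp (w : List (Bool × Bool)) : List (Bool × Bool) := w.map (fun p => (p.2, p.1))

lemma swp_swp (w : List (Bool × Bool)) : swp (swp w) = w := by
  simp [swp, List.map_map, Function.comp_def]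

lemma wt_swp (w : List (Bool × Bool)) : wt (swp w) = - wt w := by
  induction w with
  | nil => simp [swp, wt_nil]
  | cons p w ih =>
    show wt ((p.2, p.1) :: swp w) = - wt (p :: w)
    rw [wt_cons, wt_cons, ih]
    have : pval (p.2, p.1) = - pval p := by
      obtain ⟨b, c⟩ := p; cases b <;> cases c <;> simp [pval]
    rw [this]; ring

lemma take_swp (w : List (Bool × Bool)) (t : ℕ) : (swp w).take t = swp (w.take t) :=
  List.map_take.symm

lemma pos_iff_neg_swp (n : ℕ) (w : List (Bool × Bool)) : Pos n w ↔ NegC n (swp w) := by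
  constructor
  · rintro ⟨hl, h0, hp⟩
    refine ⟨by simp [swp, hl], by rw [wt_swp, h0]; ring, fun t ht1 ht2 => ?_⟩
    rw [take_swp, wt_swp]
    have := hp t ht1 ht2
    omega
  · rintro ⟨hl, h0, hp⟩
    refine ⟨by simpa [swp] using hl, by rw [wt_swp] at h0; omega, fun t ht1 ht2 => ?_⟩
    have := hp t ht1 ht2
    rw [take_swp, wt_swp] at this
    omega

/-! ### Counting -/

lemma card_pos (n : ℕ) (hn : 2 ≤ n) :
    {w : List (Bool × Bool) | Pos n w}.ncard = catalan (n - 1) := by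
  rw [← Nat.card_coe_set_eq]
  have : Nat.card {w : List (Bool × Bool) // Pos n w} = catalan (n - 1) := by
    rw [Nat.card_congr (posDyck n hn), Nat.card_eq_fintype_card,
      DyckWord.card_dyckWord_semilength_eq_catalan]
  exact this

lemma finite_pos (n : ℕ) (hn : 2 ≤ n) : {w : List (Bool × Bool) | Pos n w}.Finite := by
  rw [← Set.finite_coe_iff]
  exact Finite.of_equiv _ (posDyck n hn).symm

lemma neg_eq_image (n : ℕ) :
    {w : List (Bool × Bool) | NegC n w} = swp '' {w : List (Bool × Bool) | Pos n w} := by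
  ext w
  simp only [Set.mem_image, Set.mem_setOf_eq]
  constructor
  · intro h
    exact ⟨swp w, by rw [pos_iff_neg_swp, swp_swp]; exact h, swp_swp w⟩
  · rintro ⟨x, hx, rfl⟩
    exact (pos_iff_neg_swp n x).mp hx

lemma swp_injective : Function.Injective swp :=
  Function.LeftInverse.injective swp_swp

lemma card_mid (n : ℕ) (hn : 2 ≤ n) :
    {w : List (Bool × Bool) | Mid n w}.ncard = 2 * catalan (n - 1) := by
  have hU : {w : List (Bool × Bool) | Mid n w}
      = {w | Pos n w} ∪ {w | NegC n w} := by
    ext w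
    simp only [Set.mem_setOf_eq, Set.mem_union]
    exact mid_iff_pos_or_neg hn w
  have hd : Disjoint {w : List (Bool × Bool) | Pos n w} {w | NegC n w} := by
    rw [Set.disjoint_left]
    rintro w ⟨-, -, hp⟩ ⟨-, -, hq⟩
    have h1 := hp 1 le_rfl (by omega)
    have h2 := hq 1 le_rfl (by omega)
    omega
  have hfp := finite_pos n hn
  have hfn : {w : List (Bool × Bool) | NegC n w}.Finite := by
    rw [neg_eq_image]
    exact hfp.image _
  rw [hU, Set.ncard_union_eq hd hfp hfn, neg_eq_image,
    Set.ncard_image_of_injective _ swp_injective, card_pos n hn]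
  ring

def pairMid (n : ℕ) (hn : 2 ≤ n) :
    {p : List Bool × List Bool // p.1.length = n ∧ p.2.length = n ∧
      p.1.count true = p.2.count true ∧ MAU p.1 p.2}
    ≃ {w : List (Bool × Bool) // Mid n w} where
  toFun x := ⟨zip x.1.1 x.1.2.reverse, by
    obtain ⟨h1, h2, h3, h4⟩ := x.2
    exact (mid_iff hn h1 h2).mp ⟨h3, h4⟩⟩
  invFun x := ⟨(x.1.map Prod.fst, (x.1.map Prod.snd).reverse), by
    have hl := x.2.1
    have h1 : (x.1.map Prod.fst).length = n := by simp [hl]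
    have h2 : ((x.1.map Prod.snd).reverse).length = n := by simp [hl]
    have hz : zip (x.1.map Prod.fst) ((x.1.map Prod.snd).reverse).reverse = x.1 := by
      rw [List.reverse_reverse, List.zip_map']
      simp
    have hm : Mid n (zip (x.1.map Prod.fst) ((x.1.map Prod.snd).reverse).reverse) := by
      rw [hz]; exact x.2
    obtain ⟨h3, h4⟩ := (mid_iff hn h1 h2).mpr hm
    exact ⟨h1, h2, h3, h4⟩⟩
  left_inv x := by
    obtain ⟨⟨u, v⟩, h1, h2, h3, h4⟩ := x
    apply Subtype.ext
    have hlen : u.length = v.reverse.length := by rw [List.length_reverse, h1, h2]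
    show ((zip u v.reverse).map Prod.fst, ((zip u v.reverse).map Prod.snd).reverse) = (u, v)
    rw [List.map_fst_zip (le_of_eq hlen), List.map_snd_zip (le_of_eq hlen.symm),
      List.reverse_reverse]
  right_inv x := by
    obtain ⟨w, hw⟩ := x
    apply Subtype.ext
    show zip (w.map Prod.fst) ((w.map Prod.snd).reverse).reverse = w
    rw [List.reverse_reverse, List.zip_map']
    simp

lemma main_count (n : ℕ) (hn : 2 ≤ n) :
    ({p : List Bool × List Bool | p.1.length = n ∧ p.2.length = n ∧
        p.1.count true = p.2.count true ∧ MAU p.1 p.2}).ncard = 2 * catalan (n - 1) := by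
  have h1 : Nat.card ↥{p : List Bool × List Bool | p.1.length = n ∧ p.2.length = n ∧
      p.1.count true = p.2.count true ∧ MAU p.1 p.2}
      = Nat.card {w : List (Bool × Bool) // Mid n w} :=
    Nat.card_congr (pairMid n hn)
  rw [← Nat.card_coe_set_eq, h1, ← card_mid n hn, ← Nat.card_coe_set_eq]
  rfl

/-! ### Binomial arithmetic -/

lemma vander (m : ℕ) (hm : 1 ≤ m) :
    ∑ r ∈ Finset.Icc 1 m, m.choose r * m.choose (r - 1) = (2 * m).choose (m - 1) := by
  rw [two_mul, Nat.add_choose_eq]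
  refine Finset.sum_nbij' (fun r => (r - 1, m - r)) (fun ij => ij.1 + 1) ?_ ?_ ?_ ?_ ?_
  · intro r hr
    rw [Finset.mem_Icc] at hr
    rw [Finset.HasAntidiagonal.mem_antidiagonal]
    show (r - 1) + (m - r) = m - 1
    omega
  · intro ij hij
    rw [Finset.HasAntidiagonal.mem_antidiagonal] at hij
    rw [Finset.mem_Icc]
    show 1 ≤ ij.1 + 1 ∧ ij.1 + 1 ≤ m
    omega
  · intro r hr
    rw [Finset.mem_Icc] at hr
    show r - 1 + 1 = r
    omega
  · intro ij hij
    rw [Finset.HasAntidiagonal.mem_antidiagonal] at hij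
    obtain ⟨a, b⟩ := ij
    show (a + 1 - 1, m - (a + 1)) = (a, b)
    simp only [Prod.mk.injEq] at hij ⊢
    omega
  · intro r hr
    rw [Finset.mem_Icc] at hr
    show m.choose r * m.choose (r - 1) = m.choose (r - 1) * m.choose (m - r)
    rw [Nat.choose_symm hr.2]
    ring

lemma catalan_binom (m : ℕ) (hm : 1 ≤ m) : (2 * m).choose (m - 1) = m * catalan m := by
  have h1 := succ_mul_catalan_eq_centralBinom m
  have h2 : m.centralBinom = (2 * m).choose m := rfl
  have h3 := Nat.choose_succ_right_eq (2 * m) (m - 1)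
  rw [show m - 1 + 1 = m by omega, show 2 * m - (m - 1) = m + 1 by omega] at h3
  have h4 : (2 * m).choose (m - 1) * (m + 1) = (m * catalan m) * (m + 1) := by
    rw [← h3, ← h2, ← h1]
    ring
  exact Nat.eq_of_mul_eq_mul_right (by omega) h4

lemma partA (m : ℕ) (hm : 1 ≤ m) :
    ∑ r ∈ Finset.Icc 1 m, (1 / (m : ℚ)) * (m.choose r : ℚ) * (m.choose (r - 1) : ℚ)
      = (catalan m : ℚ) := by
  have hm0 : (m : ℚ) ≠ 0 := Nat.cast_ne_zero.mpr (by omega)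
  have hs : ∑ r ∈ Finset.Icc 1 m, (1 / (m : ℚ)) * (m.choose r : ℚ) * (m.choose (r - 1) : ℚ)
      = (1 / (m : ℚ)) * ∑ r ∈ Finset.Icc 1 m, ((m.choose r : ℚ) * (m.choose (r - 1) : ℚ)) := by
    rw [Finset.mul_sum]
    exact Finset.sum_congr rfl fun r _ => by ring
  rw [hs]
  have hv : ∑ r ∈ Finset.Icc 1 m, ((m.choose r : ℚ) * (m.choose (r - 1) : ℚ))
      = (m : ℚ) * (catalan m : ℚ) := by
    calc ∑ r ∈ Finset.Icc 1 m, ((m.choose r : ℚ) * (m.choose (r - 1) : ℚ))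
        = ((∑ r ∈ Finset.Icc 1 m, m.choose r * m.choose (r - 1) : ℕ) : ℚ) := by
          push_cast; rfl
      _ = ((m * catalan m : ℕ) : ℚ) := by rw [vander m hm, catalan_binom m hm]
      _ = (m : ℚ) * (catalan m : ℚ) := by push_cast; rfl
  rw [hv]
  field_simp

theorem stmt_12 (n : ℕ) (hn : 2 ≤ n) :
    ({p : List Bool × List Bool | p.1.length = n ∧ p.2.length = n ∧
        p.1.count true = p.2.count true ∧ MAU p.1 p.2}.ncard : ℚ)
      = 2 * ∑ r ∈ Finset.Icc 1 (n - 1),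
          (1 / ((n - 1 : ℕ) : ℚ)) * ((n - 1).choose r : ℚ) * ((n - 1).choose (r - 1) : ℚ) := by
  rw [main_count n hn, partA (n - 1) (by omega)]
  push_cast
  ring
end

section
/- Fix n ≥ 1. Let M(n) be the number of mutually abelian-bordered pairs (u,v) of binary words with |u| = |v| = n, and let M̄(n) be the number of mutually abelian-unbordered such pairs. Then the number of pairs (u,v) with |u| = |v| = n that have an external abelian-border but no internal abelian-border equals (4^n − M(n) − M̄(n))/2, and the same value counts the pairs that have an internal abelian-border but no external abelian-border. -/
/-!
Swapping the two words of a pair exchanges internal and external abelian-borders, so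
`(u, v) ↦ (v, u)` is a bijection between the pairs with only an external border and those
with only an internal one. These two classes, together with the MAB and MAU pairs, partition
the `4 ^ n` pairs of length `n`.
-/

theorem Set.ncard_sep_add_ncard_sep_not {α : Type*} {s : Set α} (hs : s.Finite)
    (P : α → Prop) : {x ∈ s | P x}.ncard + {x ∈ s | ¬ P x}.ncard = s.ncard :=
  Set.ncard_inter_add_ncard_sdiff_eq_ncard s {x | P x} hs

theorem Set.ncard_sep_and_add_ncard_sep_and_not {α : Type*} {s : Set α} (hs : s.Finite)
    (P Q : α → Prop) :
    {x ∈ s | P x ∧ Q x}.ncard + {x ∈ s | ¬ P x ∧ ¬ Q x}.ncard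
      + ({x ∈ s | P x ∧ ¬ Q x}.ncard + {x ∈ s | Q x ∧ ¬ P x}.ncard) = s.ncard := by
  have hP := Set.ncard_sep_add_ncard_sep_not hs P
  have hPQ := Set.ncard_sep_add_ncard_sep_not (hs.subset (Set.sep_subset s P)) Q
  have hnPQ := Set.ncard_sep_add_ncard_sep_not (hs.subset (Set.sep_subset s (¬ P ·))) Q
  simp only [Set.mem_ofPred_eq, and_assoc] at hPQ hnPQ
  simp only [and_comm (a := Q _)]
  omega

theorem Set.ncard_sep_eq_of_swap {α : Type*} {s : Set (α × α)}
    (hs : ∀ p, p.swap ∈ s ↔ p ∈ s) {R S : α × α → Prop} (hRS : ∀ p, R p.swap ↔ S p) :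
    {p ∈ s | R p}.ncard = {p ∈ s | S p}.ncard := by
  rw [← Set.ncard_image_of_injective _ Prod.swap_injective, Set.image_swap_eq_preimage_swap]
  congr 1
  ext p
  simp only [Set.mem_preimage, Set.mem_ofPred_eq, hs, hRS]

theorem List.ncard_setOf_length_eq (α : Type*) [Fintype α] (n : ℕ) :
    {l : List α | l.length = n}.ncard = Fintype.card α ^ n := by
  rw [← Nat.card_coe_set_eq]
  exact (Nat.card_eq_fintype_card (α := List.Vector α n)).trans (card_vector n)

theorem AbEq.symm {x y : List Bool} (h : AbEq x y) : AbEq y x := ⟨h.1.symm, h.2.symm⟩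

theorem AbEq.length_eq {x y : List Bool} (h : AbEq x y) : x.length = y.length := by
  rw [← List.count_true_add_count_false x, ← List.count_true_add_count_false y, h.1, h.2]

theorem AbEq.ne_nil {x y : List Bool} (h : AbEq x y) (hx : x ≠ []) : y ≠ [] := by
  rw [← List.length_pos_iff] at hx ⊢
  exact h.length_eq ▸ hx

theorem hasIntB_iff_hasExtB_swap (u v : List Bool) : HasIntB u v ↔ HasExtB v u := by
  constructor
  · rintro ⟨x, y, hx, hxu, hxs, hyp, hyv, hxy⟩
    exact ⟨y, x, hxy.ne_nil hx, hyv, hyp, hxs, hxu, hxy.symm⟩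
  · rintro ⟨y, x, hy, hyv, hyp, hxs, hxu, hyx⟩
    exact ⟨x, y, hyx.ne_nil hy, hxu, hxs, hyp, hyv, hyx.symm⟩

theorem stmt_16_general (n : ℕ) :
    (({p : List Bool × List Bool | p.1.length = n ∧ p.2.length = n ∧
          HasExtB p.1 p.2 ∧ ¬ HasIntB p.1 p.2}.ncard : ℚ)
        = ((4 ^ n : ℚ)
            - ({p : List Bool × List Bool | p.1.length = n ∧ p.2.length = n ∧
                MAB p.1 p.2}.ncard : ℚ)
            - ({p : List Bool × List Bool | p.1.length = n ∧ p.2.length = n ∧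
                MAU p.1 p.2}.ncard : ℚ)) / 2)
    ∧ {p : List Bool × List Bool | p.1.length = n ∧ p.2.length = n ∧
          HasExtB p.1 p.2 ∧ ¬ HasIntB p.1 p.2}.ncard
        = {p : List Bool × List Bool | p.1.length = n ∧ p.2.length = n ∧
          HasIntB p.1 p.2 ∧ ¬ HasExtB p.1 p.2}.ncard := by
  set words := {l : List Bool | l.length = n}
  have hfinite : (words ×ˢ words).Finite :=
    (List.finite_length_eq Bool n).prod (List.finite_length_eq Bool n)
  have hcard : (words ×ˢ words).ncard = 4 ^ n := by
    rw [Set.ncard_prod, List.ncard_setOf_length_eq, Fintype.card_bool, ← mul_pow]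
    norm_num
  have hparts := Set.ncard_sep_and_add_ncard_sep_and_not hfinite
    (fun p => HasIntB p.1 p.2) (fun p => HasExtB p.1 p.2)
  have hswap := Set.ncard_sep_eq_of_swap (s := words ×ˢ words) (fun _ => and_comm)
    (R := fun p => HasExtB p.1 p.2 ∧ ¬ HasIntB p.1 p.2)
    (S := fun p => HasIntB p.1 p.2 ∧ ¬ HasExtB p.1 p.2)
    (fun p => by simp only [Prod.fst_swap, Prod.snd_swap, hasIntB_iff_hasExtB_swap p.1,
      hasIntB_iff_hasExtB_swap p.2])
  simp only [words, Set.mem_prod, Set.mem_ofPred_eq, and_assoc, hcard] at hparts hswap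
  refine ⟨?_, hswap⟩
  rw [← hswap] at hparts
  have hparts_ℚ := congrArg (Nat.cast : ℕ → ℚ) hparts
  push_cast at hparts_ℚ
  simp only [MAB, MAU]
  linarith

theorem stmt_16 (n : ℕ) (hn : 1 ≤ n) :
    (({p : List Bool × List Bool | p.1.length = n ∧ p.2.length = n ∧
          HasExtB p.1 p.2 ∧ ¬ HasIntB p.1 p.2}.ncard : ℚ)
        = ((4 ^ n : ℚ)
            - ({p : List Bool × List Bool | p.1.length = n ∧ p.2.length = n ∧
                MAB p.1 p.2}.ncard : ℚ)
            - ({p : List Bool × List Bool | p.1.length = n ∧ p.2.length = n ∧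
                MAU p.1 p.2}.ncard : ℚ)) / 2)
    ∧ {p : List Bool × List Bool | p.1.length = n ∧ p.2.length = n ∧
          HasExtB p.1 p.2 ∧ ¬ HasIntB p.1 p.2}.ncard
        = {p : List Bool × List Bool | p.1.length = n ∧ p.2.length = n ∧
          HasIntB p.1 p.2 ∧ ¬ HasExtB p.1 p.2}.ncard :=
  stmt_16_general n
end
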